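/- arXiv:2106.09940 — 3 statements merged into one kernel-verified Lean document; each statement's English description precedes it below -/
import Mathlib

section
/- A 0–1 matrix with pairwise distinct rows, pairwise distinct columns, and at least 2^k + 1 rows has rank at least k + 1 over the rationals. -/
/-!
Pick `rank M` columns spanning the column space. Every column is a linear combination of them,
so a row is determined by its entries in those columns; with entries in `{0, 1}` this leaves at
most `2 ^ rank M` possible rows.
-/

open Function Submodule

namespace Matrix

variable {m n K : Type*}

theorem eq_of_eqOn_spanning_cols [Semiring K] (M : Matrix m n K) {s : Set (m → K)}
    (hs : span K s = span K (Set.range M.col)) {i₁ i₂ : m} (h : ∀ v ∈ s, v i₁ = v i₂) :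
    M i₁ = M i₂ := by
  have hspan :
      Set.EqOn (LinearMap.proj i₁ : (m → K) →ₗ[K] K) (LinearMap.proj i₂) (span K s) :=
    LinearMap.eqOn_span' h
  funext j
  exact hspan (hs ▸ subset_span (Set.mem_range_self j) : M.col j ∈ span K s)

theorem card_le_card_pow_rank_of_injective [Fintype m] [Fintype n] [Field K]
    (M : Matrix m n K) (S : Finset K) (hS : ∀ i j, M i j ∈ S) (hrows : Injective M) :
    Fintype.card m ≤ S.card ^ M.rank := by
  classical
  obtain ⟨b, hb, hspan, hli⟩ := exists_linearIndependent K (Set.range M.col)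
  have : Fintype b := hli.setFinite.fintype
  have hcard : Fintype.card b = M.rank := by
    rw [rank_eq_finrank_span_cols, ← hspan, finrank_span_set_eq_card hli, Set.toFinset_card]
  have hmemS : ∀ v ∈ b, ∀ i, v i ∈ S := by
    rintro v hv i
    obtain ⟨j, rfl⟩ := hb hv
    exact hS i j
  let restrict (i : m) (v : b) : S := ⟨v.1 i, hmemS v v.2 i⟩
  have hinj : Injective restrict := fun i₁ i₂ h =>
    hrows <| M.eq_of_eqOn_spanning_cols hspan fun v hv =>
      congrArg Subtype.val (congrFun h ⟨v, hv⟩)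
  simpa [hcard] using Fintype.card_le_of_injective restrict hinj

end Matrix

theorem stmt_0_general (m n k : ℕ) (M : Matrix (Fin m) (Fin n) ℚ)
    (h01 : ∀ i j, M i j = 0 ∨ M i j = 1)
    (hrows : Function.Injective M)
    (hm : 2 ^ k + 1 ≤ m) :
    k + 1 ≤ M.rank := by
  have hle : m ≤ 2 ^ M.rank := by
    simpa using M.card_le_card_pow_rank_of_injective {0, 1} (by simpa using h01) hrows
  have : 2 ^ k < 2 ^ M.rank := by omega
  exact (Nat.pow_lt_pow_iff_right one_lt_two).mp this

theorem stmt_0 (m n k : ℕ) (M : Matrix (Fin m) (Fin n) ℚ)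
    (h01 : ∀ i j, M i j = 0 ∨ M i j = 1)
    (hrows : Function.Injective M)
    (hcols : Function.Injective M.transpose)
    (hm : 2 ^ k + 1 ≤ m) :
    k + 1 ≤ M.rank :=
  stmt_0_general m n k M h01 hrows hm
end

section
/- For a prime p and a 0–1 matrix M of size at most d such that no square 0–1 submatrix has determinant a nonzero multiple of p, the number of vectors v ∈ 𝔽_p^d with Mv = 0 equals p^{d - r}, where r is the rank of M over ℚ. -/
/-!
The rank of a matrix over a field is the size of its largest nonsingular square submatrix, and
the minors of `M` over `𝔽_p` and over `ℚ` are the images of the integer minors. The hypothesis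
says an integer minor vanishes mod `p` only if it vanishes, so `M` has the same rank `r` over both
fields, and rank–nullity over `𝔽_p` gives a solution space of dimension `d - r`.
-/

open Function Module Submodule

lemma exists_fin_finrank_injective_linearIndependent {K V ι : Type*} [Field K] [AddCommGroup V]
    [Module K V] [Finite ι] (v : ι → V) :
    ∃ f : Fin (finrank K (span K (Set.range v))) → ι,
      Injective f ∧ LinearIndependent K (v ∘ f) := by
  obtain ⟨κ, a, ha, hspan, hli⟩ := exists_linearIndependent' K v
  have := Finite.of_injective a ha
  have := Fintype.ofFinite κ
  have hcard : Fintype.card κ = finrank K (span K (Set.range v)) := by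
    rw [← hspan, finrank_span_eq_card hli]
  let e := Fintype.equivFinOfCardEq hcard
  exact ⟨a ∘ e.symm, ha.comp e.symm.injective, hli.comp _ e.symm.injective⟩

namespace Matrix

variable {m n K : Type*} [Fintype n] [Field K]

lemma exists_submatrix_det_ne_zero [Finite m] (A : Matrix m n K) :
    ∃ (f : Fin A.rank → m) (g : Fin A.rank → n),
      Injective f ∧ Injective g ∧ (A.submatrix f g).det ≠ 0 := by
  have hrows := exists_fin_finrank_injective_linearIndependent (K := K) A.row
  rw [← rank_eq_finrank_span_row] at hrows
  obtain ⟨f, hf, hrows⟩ := hrows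
  have hB : (A.submatrix f id).rank = A.rank := by
    simpa using LinearIndependent.rank_matrix (M := A.submatrix f id) hrows
  have hcols := exists_fin_finrank_injective_linearIndependent (K := K) (A.submatrix f id)ᵀ.row
  rw [← rank_eq_finrank_span_row, rank_transpose, hB] at hcols
  obtain ⟨g, hg, hcols⟩ := hcols
  have hunit : IsUnit (A.submatrix f g) := linearIndependent_cols_iff_isUnit.mp hcols
  exact ⟨f, g, hf, hg, ((isUnit_iff_isUnit_det _).mp hunit).ne_zero⟩

lemma le_rank_of_submatrix_det_ne_zero {r : ℕ} (A : Matrix m n K) (f : Fin r → m)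
    (g : Fin r → n) (h : (A.submatrix f g).det ≠ 0) : r ≤ A.rank := by
  simpa [rank_of_det_ne_zero h] using A.rank_submatrix_le f g

variable {R L : Type*} [CommRing R] [Field L]

lemma rank_map_le_rank_map [Finite m] (φ : R →+* K) (ψ : R →+* L) (A : Matrix m n R)
    (h : ∀ (r : ℕ) (f : Fin r → m) (g : Fin r → n), Injective f → Injective g →
      φ (A.submatrix f g).det ≠ 0 → ψ (A.submatrix f g).det ≠ 0) :
    (A.map φ).rank ≤ (A.map ψ).rank := by
  obtain ⟨f, g, hf, hg, hdet⟩ := (A.map φ).exists_submatrix_det_ne_zero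
  refine (A.map ψ).le_rank_of_submatrix_det_ne_zero f g ?_
  rw [submatrix_map, ← RingHom.mapMatrix_apply, ← RingHom.map_det] at hdet ⊢
  exact h _ f g hf hg hdet

lemma rank_map_eq_rank_map [Finite m] (φ : R →+* K) (ψ : R →+* L) (A : Matrix m n R)
    (h : ∀ (r : ℕ) (f : Fin r → m) (g : Fin r → n), Injective f → Injective g →
      (φ (A.submatrix f g).det = 0 ↔ ψ (A.submatrix f g).det = 0)) :
    (A.map φ).rank = (A.map ψ).rank :=
  le_antisymm (rank_map_le_rank_map φ ψ A fun r f g hf hg ↦ (h r f g hf hg).not.mp)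
    (rank_map_le_rank_map ψ φ A fun r f g hf hg ↦ (h r f g hf hg).not.mpr)

lemma natCard_mulVec_eq_zero [Finite K] (A : Matrix m n K) :
    Nat.card {v : n → K // A *ᵥ v = 0} = Nat.card K ^ (Fintype.card n - A.rank) := by
  have hker : finrank K (LinearMap.ker A.mulVecLin) = Fintype.card n - A.rank := by
    have := A.mulVecLin.finrank_range_add_finrank_ker
    rw [finrank_fintype_fun_eq_card] at this
    unfold rank
    omega
  rw [← hker, ← natCard_eq_pow_finrank]
  rfl

end Matrix

theorem stmt_2_general (p : ℕ) (hp : p.Prime) (m d : ℕ)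
    (M : Matrix (Fin m) (Fin d) ℤ)
    (hdet : ∀ (r : ℕ) (f : Fin r → Fin m) (g : Fin r → Fin d),
      Function.Injective f → Function.Injective g →
      ¬ ((M.submatrix f g).det ≠ 0 ∧ (p : ℤ) ∣ (M.submatrix f g).det)) :
    Nat.card {v : Fin d → ZMod p // (M.map (Int.cast : ℤ → ZMod p)).mulVec v = 0} =
      p ^ (d - (M.map (Int.cast : ℤ → ℚ)).rank) := by
  have : Fact p.Prime := ⟨hp⟩
  have hrank : (M.map (Int.cast : ℤ → ZMod p)).rank = (M.map (Int.cast : ℤ → ℚ)).rank :=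
    M.rank_map_eq_rank_map (Int.castRingHom (ZMod p)) (Int.castRingHom ℚ) fun r f g hf hg ↦ by
      simp only [eq_intCast, ZMod.intCast_zmod_eq_zero_iff_dvd, Int.cast_eq_zero]
      exact ⟨fun hdvd ↦ not_not.mp fun hne ↦ hdet r f g hf hg ⟨hne, hdvd⟩,
        fun h0 ↦ h0 ▸ dvd_zero _⟩
  rw [Matrix.natCard_mulVec_eq_zero, Nat.card_zmod, hrank, Fintype.card_fin]

theorem stmt_2 (p : ℕ) (hp : p.Prime) (m d : ℕ) (hmd : m ≤ d)
    (M : Matrix (Fin m) (Fin d) ℤ)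
    (h01 : ∀ i j, M i j = 0 ∨ M i j = 1)
    (hdet : ∀ (r : ℕ) (f : Fin r → Fin m) (g : Fin r → Fin d),
      Function.Injective f → Function.Injective g →
      ¬ ((M.submatrix f g).det ≠ 0 ∧ (p : ℤ) ∣ (M.submatrix f g).det)) :
    Nat.card {v : Fin d → ZMod p // (M.map (Int.cast : ℤ → ZMod p)).mulVec v = 0} =
      p ^ (d - (M.map (Int.cast : ℤ → ℚ)).rank) :=
  stmt_2_general p hp m d M hdet
end

section
/- For every d, there exists a polynomial χ_d(t) with integer coefficients such that for all sufficiently large primes p, the number of vectors v ∈ 𝔽_p^d having no nonempty subset of coordinates summing to zero equals χ_d(p). -/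
/-!
For a set `t` of nonempty subsets of `{1, …, d}`, the vectors all of whose subset sums over
`I ∈ t` vanish form the kernel of an integer `0/1` matrix reduced mod `p`. By the Smith normal
form, reduction mod `p` preserves the rank of an integer matrix once `p` exceeds all its
invariant factors, so this kernel has `p ^ (d - r_t)` elements with `r_t` independent of `p`.
Inclusion–exclusion over `t` then gives the count `∑_t (-1)^|t| p ^ (d - r_t)`.
-/

open Finset Module Submodule Matrix

namespace Module.Basis.SmithNormalForm

variable {R M ι : Type*} [CommRing R] [AddCommGroup M] [Module R M] {N : Submodule R M} {n : ℕ}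
  (snf : Basis.SmithNormalForm N ι n)

lemma span_range_bN : span R (Set.range fun i => (snf.bN i : M)) = N := by
  rw [show (fun i => (snf.bN i : M)) = N.subtype ∘ snf.bN from rfl, Set.range_comp, ← map_span,
    snf.bN.span_eq, map_subtype_top]

lemma a_ne_zero [Nontrivial R] (i : Fin n) : snf.a i ≠ 0 := by
  intro h
  apply snf.bN.ne_zero i
  ext
  simp [snf.snf, h]

end Module.Basis.SmithNormalForm

section IntCastPi

variable (K : Type*) [Ring K] (ι : Type*)

def intCastPi : (ι → ℤ) →ₗ[ℤ] ι → K := (Int.castAddHom K).toIntLinearMap.compLeft ι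

@[simp] lemma intCastPi_apply (x : ι → ℤ) (i : ι) : intCastPi K ι x i = x i := rfl

variable {K ι}

lemma span_intCastPi_image_span (s : Set (ι → ℤ)) :
    span K (intCastPi K ι '' span ℤ s) = span K (intCastPi K ι '' s) := by
  rw [← map_coe, ← span_image, span_span_of_tower]

lemma span_range_intCastPi_comp_basis [Finite ι] (b : Basis ι ℤ (ι → ℤ)) :
    span K (Set.range (intCastPi K ι ∘ b)) = ⊤ := by
  classical
  rw [Set.range_comp, ← span_intCastPi_image_span, b.span_eq, eq_top_iff,
    ← (Pi.basisFun K ι).span_eq, span_le]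
  rintro _ ⟨i, rfl⟩
  exact subset_span ⟨Pi.single i 1, trivial, by ext j; simp [Pi.single_apply]⟩

end IntCastPi

section Field

variable {K : Type*} [Field K] {ι : Type*} [Fintype ι]

lemma linearIndependent_intCastPi_comp_basis (b : Basis ι ℤ (ι → ℤ)) :
    LinearIndependent K (intCastPi K ι ∘ b) :=
  linearIndependent_of_top_le_span_of_card_eq_finrank (span_range_intCastPi_comp_basis b).ge
    (finrank_fintype_fun_eq_card K).symm

lemma finrank_span_intCastPi_image_eq {L : Submodule ℤ (ι → ℤ)} {n : ℕ}
    (snf : Basis.SmithNormalForm L ι n) (ha : ∀ i, (snf.a i : K) ≠ 0) :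
    finrank K (span K (intCastPi K ι '' L)) = n := by
  have hbN : intCastPi K ι ∘ (fun i => (snf.bN i : ι → ℤ)) =
      fun i => Units.mk0 _ (ha i) • intCastPi K ι (snf.bM (snf.f i)) := by
    ext i j
    simp [snf.snf]
  have hli : LinearIndependent K (intCastPi K ι ∘ fun i => (snf.bN i : ι → ℤ)) := by
    rw [hbN]
    exact ((linearIndependent_intCastPi_comp_basis snf.bM).comp _ snf.f.injective).units_smul _
  rw [← snf.span_range_bN, span_intCastPi_image_span, ← Set.range_comp,
    finrank_span_eq_card hli, Fintype.card_fin]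

end Field

lemma exists_finrank_span_intCastPi_image_zmod_eq {ι : Type*} [Fintype ι]
    (L : Submodule ℤ (ι → ℤ)) :
    ∃ r N : ℕ, ∀ p : ℕ, p.Prime → N ≤ p →
      finrank (ZMod p) (span (ZMod p) (intCastPi (ZMod p) ι '' L)) = r := by
  obtain ⟨r, snf⟩ := L.smithNormalForm (Pi.basisFun ℤ ι)
  refine ⟨r, univ.sup (fun i => (snf.a i).natAbs) + 1, fun p hp hpN => ?_⟩
  have : Fact p.Prime := ⟨hp⟩
  refine finrank_span_intCastPi_image_eq snf fun i hi => ?_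
  have hdvd : p ∣ (snf.a i).natAbs := by
    rwa [ZMod.intCast_zmod_eq_zero_iff_dvd, Int.natCast_dvd] at hi
  have hle : (snf.a i).natAbs ≤ univ.sup fun i => (snf.a i).natAbs :=
    le_sup (f := fun i => (snf.a i).natAbs) (mem_univ i)
  have := Nat.le_of_dvd (Int.natAbs_pos.mpr (snf.a_ne_zero i)) hdvd
  omega

namespace Matrix

variable {m n : Type*} [Fintype n]

lemma rank_map_intCast (K : Type*) [CommRing K] (A : Matrix m n ℤ) :
    (A.map (Int.cast : ℤ → K)).rank =
      finrank K (span K (intCastPi K m '' span ℤ (Set.range A.col))) := by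
  rw [rank, range_mulVecLin, span_intCastPi_image_span, ← Set.range_comp]
  rfl

lemma exists_rank_map_intCast_zmod_eq [Fintype m] (A : Matrix m n ℤ) :
    ∃ r N : ℕ, ∀ p : ℕ, p.Prime → N ≤ p →
      (A.map (Int.cast : ℤ → ZMod p)).rank = r := by
  simp only [rank_map_intCast]
  exact exists_finrank_span_intCastPi_image_zmod_eq _

lemma card_ker_mulVec {K : Type*} [Field K] (A : Matrix m n K) :
    Nat.card {v : n → K // A *ᵥ v = 0} = Nat.card K ^ (Fintype.card n - A.rank) := by
  have hrank := A.mulVecLin.finrank_range_add_finrank_ker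
  rw [finrank_fintype_fun_eq_card] at hrank
  rw [show Nat.card {v : n → K // A *ᵥ v = 0} = Nat.card (LinearMap.ker A.mulVecLin) from rfl,
    natCard_eq_pow_finrank (K := K), rank]
  congr 1
  omega

end Matrix

def subsetSumMatrix {ι : Type*} [DecidableEq ι] (t : Finset (Finset ι)) : Matrix t ι ℤ :=
  Matrix.of fun I i => if i ∈ (I : Finset ι) then 1 else 0

lemma subsetSumMatrix_map_mulVec {ι R : Type*} [Fintype ι] [DecidableEq ι] [Ring R]
    (t : Finset (Finset ι)) (v : ι → R) (I : t) :
    ((subsetSumMatrix t).map (Int.cast : ℤ → R) *ᵥ v) I = ∑ i ∈ (I : Finset ι), v i := by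
  simp [subsetSumMatrix, mulVec, dotProduct, sum_ite_mem]

lemma card_subsetSum_ne_zero_eq_sum {ι R : Type*} [Fintype ι] [DecidableEq ι] [Ring R]
    [Finite R] :
    (Nat.card {v : ι → R // ∀ I : Finset ι, I.Nonempty → ∑ i ∈ I, v i ≠ 0} : ℤ) =
      ∑ t ∈ ({I | I.Nonempty} : Finset (Finset ι)).powerset,
        (-1 : ℤ) ^ #t *
          Nat.card {v : ι → R // (subsetSumMatrix t).map Int.cast *ᵥ v = 0} := by
  classical
  have := Fintype.ofFinite R
  have hS := inclusion_exclusion_card_inf_compl ({I | I.Nonempty} : Finset (Finset ι))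
    fun I => ({v | ∑ i ∈ I, v i = 0} : Finset (ι → R))
  simp only [Nat.card_eq_fintype_card, Fintype.card_subtype]
  convert hS using 4 with t
  · ext v
    simp [Finset.mem_inf]
  · congr 1
    ext v
    simp [Finset.mem_inf, funext_iff, subsetSumMatrix_map_mulVec]

theorem stmt_3 (d : ℕ) :
    ∃ (χ : Polynomial ℤ) (N : ℕ), ∀ p : ℕ, p.Prime → N ≤ p →
      (Nat.card {v : Fin d → ZMod p //
          ∀ I : Finset (Fin d), I.Nonempty → ∑ i ∈ I, v i ≠ 0} : ℤ) =
        χ.eval (p : ℤ) := by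
  choose r N hr using fun t : Finset (Finset (Fin d)) =>
    (subsetSumMatrix t).exists_rank_map_intCast_zmod_eq
  refine ⟨∑ t ∈ ({I | I.Nonempty} : Finset (Finset (Fin d))).powerset,
      (-1) ^ #t * Polynomial.X ^ (d - r t), univ.sup N, fun p hp hpN => ?_⟩
  have : Fact p.Prime := ⟨hp⟩
  rw [card_subsetSum_ne_zero_eq_sum, Polynomial.eval_finsetSum]
  refine sum_congr rfl fun t _ => ?_
  rw [card_ker_mulVec, hr t p hp ((le_sup (mem_univ t)).trans hpN)]
  simp
end
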